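/- Let c_n denote the number of UU-equivalence classes of ballot paths of length n (so c₀ = 1, counting the class of the empty path). Then in the ring of formal power series over ℚ, (∑_{n≥0} c_n xⁿ) · (1 − 2x + x³ − x⁴ + x⁵) = 1 − x − x⁴. -/
import Mathlib


/-- A path is a list of steps: `true` is an up-step U, `false` is a down-step D. -/
abbrev Step := Bool

/-- The height of the `j`-th lattice point of the path `p`. -/
def pathHeight (p : List Bool) (j : ℕ) : ℤ :=
  ((p.take j).count true : ℤ) - ((p.take j).count false : ℤ)

/-- A ballot path: every prefix has at least as many U's as D's. -/
def IsBallot (p : List Bool) : Prop :=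
  ∀ k : ℕ, (p.take k).count false ≤ (p.take k).count true

/-- A Dyck path: a ballot path with equally many U's and D's. -/
def IsDyck (p : List Bool) : Prop :=
  IsBallot p ∧ p.count true = p.count false

/-- The string `τ` occurs at (0-indexed) position `i` of the path `p`. -/
def OccursAt (τ p : List Bool) (i : ℕ) : Prop :=
  (p.drop i).take τ.length = τ

/-- Two paths are `τ`-equivalent: same length and occurrences of `τ` at the same positions. -/
def PathEquiv (τ p q : List Bool) : Prop :=
  p.length = q.length ∧ ∀ i : ℕ, OccursAt τ p i ↔ OccursAt τ q i

/-- The setoid of `τ`-equivalence on ballot paths of length `n`. -/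
def ballotSetoid (τ : List Bool) (n : ℕ) :
    Setoid {p : List Bool // IsBallot p ∧ p.length = n} where
  r p q := PathEquiv τ p.1 q.1
  iseqv := ⟨fun _ => ⟨rfl, fun _ => Iff.rfl⟩,
            fun h => ⟨h.1.symm, fun i => (h.2 i).symm⟩,
            fun h1 h2 => ⟨h1.1.trans h2.1, fun i => (h1.2 i).trans (h2.2 i)⟩⟩

/-- The number of `τ`-equivalence classes of ballot paths of length `n`. -/
noncomputable def numBallotClasses (τ : List Bool) (n : ℕ) : ℕ :=
  Nat.card (Quotient (ballotSetoid τ n))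

/-- The setoid of `τ`-equivalence on Dyck paths of semilength `n`. -/
def dyckSetoid (τ : List Bool) (n : ℕ) :
    Setoid {p : List Bool // IsDyck p ∧ p.length = 2 * n} where
  r p q := PathEquiv τ p.1 q.1
  iseqv := ⟨fun _ => ⟨rfl, fun _ => Iff.rfl⟩,
            fun h => ⟨h.1.symm, fun i => (h.2 i).symm⟩,
            fun h1 h2 => ⟨h1.1.trans h2.1, fun i => (h1.2 i).trans (h2.2 i)⟩⟩

/-- The number of `τ`-equivalence classes of Dyck paths of semilength `n`. -/
noncomputable def numDyckClasses (τ : List Bool) (n : ℕ) : ℕ :=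
  Nat.card (Quotient (dyckSetoid τ n))

namespace UUAux

/-- step value -/
def d (c : Bool) : ℤ := if c then 1 else -1

/-- heights stay nonneg after each step, starting from h -/
def Good : ℤ → List Bool → Prop
  | _, [] => True
  | h, c :: t => 0 ≤ h + d c ∧ Good (h + d c) t

/-- signature continuation: previous path letter pp -/
def sig2 : Bool → List Bool → List Bool
  | _, [] => []
  | pp, c :: t => (pp && c) :: sig2 c t

def sig : List Bool → List Bool
  | [] => []
  | c :: t => sig2 c t

inductive St | A | B | C | D | E
deriving DecidableEq

open St

def live : St → List Bool → Bool
  | _, [] => true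
  | A, false :: t => live B t
  | A, true :: t => live C t
  | B, false :: t => live A t
  | B, true :: _ => false
  | C, false :: t => live D t
  | C, true :: t => live C t
  | D, false :: t => live E t
  | D, true :: _ => false
  | E, false :: t => live E t
  | E, true :: t => live C t

def build : Bool → Bool → List Bool → List Bool
  | pw, pp, [] => [pw || !pp]
  | pw, pp, a :: t => (pw || a || (!pp && !(t.headD false))) ::
      build a (pw || a || (!pp && !(t.headD false))) t

def P1 : List Bool → Bool
  | a :: b :: c :: t => (!(a && !b && c)) && P1 (b :: c :: t)
  | _ => true

def P2 : List Bool → Bool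
  | false :: true :: _ => false
  | false :: false :: t => P2 t
  | _ => true

lemma sig2_false (p : List Bool) (hp : p ≠ []) : sig2 false p = false :: sig p := by
  cases p with
  | nil => exact absurd rfl hp
  | cons c t => simp [sig2, sig]

lemma build_length (pw pp : Bool) (w : List Bool) : (build pw pp w).length = w.length + 1 := by
  induction w generalizing pw pp with
  | nil => rfl
  | cons a t ih => simp [build, ih]

lemma P1_tail {a : Bool} {u : List Bool} (h : P1 (a :: u) = true) : P1 u = true := by
  match u with
  | [] => rfl
  | [b] => rfl
  | b :: c :: t => exact (Bool.and_eq_true _ _ |>.mp h).2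

lemma P1_cons {x : Bool} {l : List Bool}
    (h : P1 l = true) (hw : ∀ y z r, l = y :: z :: r → (x && !y && z) = false) :
    P1 (x :: l) = true := by
  match l with
  | [] => rfl
  | [b] => rfl
  | b :: c :: t =>
    have := hw b c t rfl
    simp only [P1, Bool.and_eq_true]
    constructor
    · cases x <;> cases b <;> cases c <;> simp_all
    · exact h

lemma liveCE : ∀ n v, v.length ≤ n →
    (P1 v = true → live E v = true) ∧ (P1 (true :: v) = true → live C v = true) := by
  intro n
  induction n with
  | zero =>
    intro v hv
    have : v = [] := List.eq_nil_of_length_eq_zero (Nat.le_zero.mp hv)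
    subst this
    exact ⟨fun _ => rfl, fun _ => rfl⟩
  | succ n ih =>
    intro v hv
    match v with
    | [] => exact ⟨fun _ => rfl, fun _ => rfl⟩
    | true :: v' =>
      have hl : v'.length ≤ n := by simpa using hv
      constructor
      · intro h1
        show live C v' = true
        exact (ih v' hl).2 h1
      · intro h1
        show live C v' = true
        exact (ih v' hl).2 (P1_tail h1)
    | false :: v' =>
      have hl : v'.length ≤ n := by simpa using hv
      constructor
      · intro h1
        show live E v' = true
        exact (ih v' hl).1 (P1_tail h1)
      · intro h1
        show live D v' = true
        match v' with
        | [] => rfl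
        | true :: v'' =>
          exfalso
          have : P1 (true :: false :: true :: v'') = true := h1
          simp [P1] at this
        | false :: v'' =>
          show live E v'' = true
          have hl2 : v''.length ≤ n := by
            simp at hl; omega
          exact (ih v'' hl2).1 (P1_tail (P1_tail (P1_tail h1)))

lemma liveA : ∀ n w, w.length ≤ n → P1 w = true → P2 w = true → live A w = true := by
  intro n
  induction n with
  | zero =>
    intro w hw _ _
    have : w = [] := List.eq_nil_of_length_eq_zero (Nat.le_zero.mp hw)
    subst this; rfl
  | succ n ih =>
    intro w hw h1 h2
    match w with
    | [] => rfl
    | true :: v =>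
      show live C v = true
      exact (liveCE v.length v le_rfl).2 h1
    | [false] => rfl
    | false :: true :: v => simp [P2] at h2
    | false :: false :: u =>
      show live A u = true
      have hl : u.length ≤ n := by simp at hw; omega
      exact ih u hl (P1_tail (P1_tail h1)) h2

lemma P1_sig2 : ∀ (t : List Bool) (pp : Bool), P1 (sig2 pp t) = true := by
  intro t
  induction t with
  | nil => intro pp; rfl
  | cons c t' ih =>
    intro pp
    show P1 ((pp && c) :: sig2 c t') = true
    apply P1_cons (ih c)
    intro y z r hyz
    match t', hyz with
    | d1 :: t'', hyz =>
      match t'', hyz with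
      | d2 :: t''', hyz =>
        simp only [sig2, List.cons.injEq] at hyz
        obtain ⟨hy, hz, _⟩ := hyz
        subst hy; subst hz
        cases pp <;> cases c <;> cases d1 <;> cases d2 <;> rfl

lemma P2_sig : ∀ n (p : List Bool), p.length ≤ n → Good 0 p → P2 (sig p) = true := by
  intro n
  induction n with
  | zero => intro p hp _;
            have : p = [] := List.eq_nil_of_length_eq_zero (Nat.le_zero.mp hp)
            subst this; rfl
  | succ n ih =>
    intro p hp hg
    match p with
    | [] => rfl
    | [a] => rfl
    | a :: b :: t =>
      -- a must be true
      have ha : a = true := by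
        rcases hg with ⟨h1, _⟩
        cases a
        · exfalso; simp [d] at h1
        · rfl
      subst ha
      cases b with
      | true => rfl
      | false =>
        -- sig p = false :: sig2 false t
        show P2 ((true && false) :: sig2 false t) = true
        match t with
        | [] => rfl
        | c :: t' =>
          show P2 (false :: (false && c) :: sig2 c t') = true
          have : P2 (sig2 c t') = true := by
            have hg' : Good 0 (c :: t') := by
              rcases hg with ⟨_, h2, h3⟩
              simpa [d] using h3
            have hl : (c :: t').length ≤ n := by simp at hp ⊢; omega
            exact ih (c :: t') hl hg'
          simpa [P2] using this


def Ctx : St → Bool → Bool → ℤ → List Bool → Prop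
  | A, pw, pp, h, _ => pw = false ∧ pp = false ∧ 0 ≤ h
  | B, pw, pp, h, _ => pw = false ∧ pp = true ∧ 1 ≤ h
  | C, pw, pp, h, _ => pw = true ∧ pp = true ∧ 1 ≤ h
  | D, pw, pp, h, _ => pw = false ∧ pp = true ∧ 2 ≤ h
  | E, pw, pp, h, w => pw = false ∧
      ((pp = false ∧ 0 ≤ h ∧ (w.headD false = false → 1 ≤ h)) ∨
       (pp = true ∧ 2 ≤ h ∧ w.headD false = false))

lemma main_build : ∀ (w : List Bool) (s : St) (pw pp : Bool) (h : ℤ),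
    live s w = true → Ctx s pw pp h w →
    Good h (build pw pp w) ∧ sig2 pp (build pw pp w) = pw :: w := by
  intro w
  induction w with
  | nil =>
    intro s pw pp h _ hc
    cases s <;> simp only [Ctx] at hc
    · obtain ⟨h1, h2, h3⟩ := hc; subst h1; subst h2
      exact ⟨⟨by simp [d]; omega, trivial⟩, rfl⟩
    · obtain ⟨h1, h2, h3⟩ := hc; subst h1; subst h2
      exact ⟨⟨by simp [d]; omega, trivial⟩, rfl⟩
    · obtain ⟨h1, h2, h3⟩ := hc; subst h1; subst h2
      exact ⟨⟨by simp [d]; omega, trivial⟩, rfl⟩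
    · obtain ⟨h1, h2, h3⟩ := hc; subst h1; subst h2
      exact ⟨⟨by simp [d]; omega, trivial⟩, rfl⟩
    · obtain ⟨h1, hc⟩ := hc; subst h1
      rcases hc with ⟨h2, h3, _⟩ | ⟨h2, h3, _⟩ <;> subst h2
      · exact ⟨⟨by simp [d]; omega, trivial⟩, rfl⟩
      · exact ⟨⟨by simp [d]; omega, trivial⟩, rfl⟩
  | cons a t ih =>
    intro s pw pp h hl hc
    cases s <;> simp only [Ctx] at hc
    case A =>
      obtain ⟨h1, h2, h3⟩ := hc; subst h1; subst h2
      cases a with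
      | true =>
        have hl' : live C t = true := hl
        have ih' := ih C true true (h + 1) hl' ⟨rfl, rfl, by omega⟩
        refine ⟨⟨by simp [d]; omega, by simpa [d] using ih'.1⟩, ?_⟩
        conv_lhs => rw [build]
        simp only [List.headD_cons, List.headD_nil, Bool.not_false, Bool.not_true, Bool.false_or, Bool.or_false, Bool.true_or, Bool.or_true, Bool.false_and, Bool.true_and, Bool.and_false, Bool.and_true, Bool.and_self, Bool.or_self]
        rw [sig2, ih'.2]
        rfl
      | false =>
        have hl' : live B t = true := hl
        match t, hl', ih with
        | [], hl', ih =>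
          have ih' := ih B false true (h + 1) hl' ⟨rfl, rfl, by omega⟩
          refine ⟨⟨by simp [d]; omega, by simpa [d] using ih'.1⟩, ?_⟩
          conv_lhs => rw [build]
          simp only [List.headD_cons, List.headD_nil, Bool.not_false, Bool.not_true, Bool.false_or, Bool.or_false, Bool.true_or, Bool.or_true, Bool.false_and, Bool.true_and, Bool.and_false, Bool.and_true, Bool.and_self, Bool.or_self]
          rw [sig2, ih'.2]
          rfl
        | true :: t', hl', ih => exact absurd hl' (by simp [live])
        | false :: t', hl', ih =>
          have ih' := ih B false true (h + 1) hl' ⟨rfl, rfl, by omega⟩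
          refine ⟨⟨by simp [d]; omega, by simpa [d] using ih'.1⟩, ?_⟩
          conv_lhs => rw [build]
          simp only [List.headD_cons, List.headD_nil, Bool.not_false, Bool.not_true, Bool.false_or, Bool.or_false, Bool.true_or, Bool.or_true, Bool.false_and, Bool.true_and, Bool.and_false, Bool.and_true, Bool.and_self, Bool.or_self]
          rw [sig2, ih'.2]
          rfl
    case B =>
      obtain ⟨h1, h2, h3⟩ := hc; subst h1; subst h2
      cases a with
      | true => exact absurd hl (by simp [live])
      | false =>
        have hl' : live A t = true := hl
        have ih' := ih A false false (h - 1) hl' ⟨rfl, rfl, by omega⟩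
        refine ⟨⟨by simp [d]; omega, by simpa [d, sub_eq_add_neg] using ih'.1⟩, ?_⟩
        conv_lhs => rw [build]
        simp only [List.headD_cons, List.headD_nil, Bool.not_false, Bool.not_true, Bool.false_or, Bool.or_false, Bool.true_or, Bool.or_true, Bool.false_and, Bool.true_and, Bool.and_false, Bool.and_true, Bool.and_self, Bool.or_self]
        rw [sig2, ih'.2]
        rfl
    case C =>
      obtain ⟨h1, h2, h3⟩ := hc; subst h1; subst h2
      cases a with
      | true =>
        have hl' : live C t = true := hl
        have ih' := ih C true true (h + 1) hl' ⟨rfl, rfl, by omega⟩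
        refine ⟨⟨by simp [d]; omega, by simpa [d] using ih'.1⟩, ?_⟩
        conv_lhs => rw [build]
        simp only [List.headD_cons, List.headD_nil, Bool.not_false, Bool.not_true, Bool.false_or, Bool.or_false, Bool.true_or, Bool.or_true, Bool.false_and, Bool.true_and, Bool.and_false, Bool.and_true, Bool.and_self, Bool.or_self]
        rw [sig2, ih'.2]
        rfl
      | false =>
        have hl' : live D t = true := hl
        have ih' := ih D false true (h + 1) hl' ⟨rfl, rfl, by omega⟩
        refine ⟨⟨by simp [d]; omega, by simpa [d] using ih'.1⟩, ?_⟩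
        conv_lhs => rw [build]
        simp only [List.headD_cons, List.headD_nil, Bool.not_false, Bool.not_true, Bool.false_or, Bool.or_false, Bool.true_or, Bool.or_true, Bool.false_and, Bool.true_and, Bool.and_false, Bool.and_true, Bool.and_self, Bool.or_self]
        rw [sig2, ih'.2]
        rfl
    case D =>
      obtain ⟨h1, h2, h3⟩ := hc; subst h1; subst h2
      cases a with
      | true => exact absurd hl (by simp [live])
      | false =>
        have hl' : live E t = true := hl
        have ih' := ih E false false (h - 1) hl'
          ⟨rfl, Or.inl ⟨rfl, by omega, fun _ => by omega⟩⟩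
        refine ⟨⟨by simp [d]; omega, by simpa [d, sub_eq_add_neg] using ih'.1⟩, ?_⟩
        conv_lhs => rw [build]
        simp only [List.headD_cons, List.headD_nil, Bool.not_false, Bool.not_true, Bool.false_or, Bool.or_false, Bool.true_or, Bool.or_true, Bool.false_and, Bool.true_and, Bool.and_false, Bool.and_true, Bool.and_self, Bool.or_self]
        rw [sig2, ih'.2]
        rfl
    case E =>
      obtain ⟨h1, hc⟩ := hc; subst h1
      rcases hc with ⟨h2, h3, h4⟩ | ⟨h2, h3, h4⟩ <;> subst h2
      · cases a with
        | true =>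
          have hl' : live C t = true := hl
          have ih' := ih C true true (h + 1) hl' ⟨rfl, rfl, by omega⟩
          refine ⟨⟨by simp [d]; omega, by simpa [d] using ih'.1⟩, ?_⟩
          conv_lhs => rw [build]
          simp only [List.headD_cons, List.headD_nil, Bool.not_false, Bool.not_true, Bool.false_or, Bool.or_false, Bool.true_or, Bool.or_true, Bool.false_and, Bool.true_and, Bool.and_false, Bool.and_true, Bool.and_self, Bool.or_self]
          rw [sig2, ih'.2]
          rfl
        | false =>
          have h3' : 1 ≤ h := h4 rfl
          have hl' : live E t = true := hl
          match t, hl', ih with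
          | [], hl', ih =>
            have ih' := ih E false true (h + 1) hl' ⟨rfl, Or.inr ⟨rfl, by omega, rfl⟩⟩
            refine ⟨⟨by simp [d]; omega, by simpa [d] using ih'.1⟩, ?_⟩
            conv_lhs => rw [build]
            simp only [List.headD_cons, List.headD_nil, Bool.not_false, Bool.not_true, Bool.false_or, Bool.or_false, Bool.true_or, Bool.or_true, Bool.false_and, Bool.true_and, Bool.and_false, Bool.and_true, Bool.and_self, Bool.or_self]
            rw [sig2, ih'.2]
            rfl
          | false :: t', hl', ih =>
            have ih' := ih E false true (h + 1) hl' ⟨rfl, Or.inr ⟨rfl, by omega, rfl⟩⟩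
            refine ⟨⟨by simp [d]; omega, by simpa [d] using ih'.1⟩, ?_⟩
            conv_lhs => rw [build]
            simp only [List.headD_cons, List.headD_nil, Bool.not_false, Bool.not_true, Bool.false_or, Bool.or_false, Bool.true_or, Bool.or_true, Bool.false_and, Bool.true_and, Bool.and_false, Bool.and_true, Bool.and_self, Bool.or_self]
            rw [sig2, ih'.2]
            rfl
          | true :: t', hl', ih =>
            have ih' := ih E false false (h - 1) hl'
              ⟨rfl, Or.inl ⟨rfl, by omega, by simp⟩⟩
            refine ⟨⟨by simp [d]; omega, by simpa [d, sub_eq_add_neg] using ih'.1⟩, ?_⟩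
            conv_lhs => rw [build]
            simp only [List.headD_cons, List.headD_nil, Bool.not_false, Bool.not_true, Bool.false_or, Bool.or_false, Bool.true_or, Bool.or_true, Bool.false_and, Bool.true_and, Bool.and_false, Bool.and_true, Bool.and_self, Bool.or_self]
            rw [sig2, ih'.2]
            rfl
      · cases a with
        | true => simp at h4
        | false =>
          have hl' : live E t = true := hl
          have ih' := ih E false false (h - 1) hl'
            ⟨rfl, Or.inl ⟨rfl, by omega, fun _ => by omega⟩⟩
          refine ⟨⟨by simp [d]; omega, by simpa [d, sub_eq_add_neg] using ih'.1⟩, ?_⟩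
          conv_lhs => rw [build]
          simp only [List.headD_cons, List.headD_nil, Bool.not_false, Bool.not_true, Bool.false_or, Bool.or_false, Bool.true_or, Bool.or_true, Bool.false_and, Bool.true_and, Bool.and_false, Bool.and_true, Bool.and_self, Bool.or_self]
          rw [sig2, ih'.2]
          rfl

lemma good_iff : ∀ (p : List Bool) (h : ℤ), Good h p ↔
    ∀ k, 1 ≤ k → k ≤ p.length →
      (((p.take k).count false : ℤ)) ≤ h + ((p.take k).count true : ℤ) := by
  intro p
  induction p with
  | nil =>
    intro h
    constructor
    · intro _ k hk1 hk2
      simp at hk2; omega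
    · intro _; trivial
  | cons c t ih =>
    intro h
    constructor
    · rintro ⟨hg1, hg2⟩ k hk1 hk2
      match k with
      | 1 =>
        cases c <;> simp [d] at hg1 ⊢ <;> omega
      | (j+2) =>
        have hj2 : j + 1 ≤ t.length := by simpa using hk2
        have := (ih (h + d c)).mp hg2 (j+1) (by omega) hj2
        rw [List.take_succ_cons]
        cases c <;> simp [d, List.count_cons] at this ⊢ <;> push_cast at this ⊢ <;> omega
    · intro hk
      constructor
      · have := hk 1 (by omega) (by simp)
        cases c <;> simp [d] at this ⊢ <;> omega
      · apply (ih (h + d c)).mpr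
        intro j hj1 hj2
        have := hk (j+1) (by omega) (by simp; omega)
        rw [List.take_succ_cons] at this
        cases c <;> simp [d, List.count_cons] at this ⊢ <;> push_cast at this ⊢ <;> omega

lemma isBallot_iff (p : List Bool) : IsBallot p ↔ Good 0 p := by
  constructor
  · intro hb
    apply (good_iff p 0).mpr
    intro k _ _
    have := hb k
    push_cast
    omega
  · intro hg k
    rcases Nat.eq_zero_or_pos k with rfl | hk1
    · simp
    · by_cases hk : k ≤ p.length
      · have := (good_iff p 0).mp hg k hk1 hk
        omega
      · push_neg at hk
        rw [List.take_of_length_le (le_of_lt hk)]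
        rcases Nat.eq_zero_or_pos p.length with hp | hp
        · have hpn : p = [] := List.eq_nil_of_length_eq_zero hp
          subst hpn; simp
        · have := (good_iff p 0).mp hg p.length hp le_rfl
          rw [List.take_length] at this
          omega

lemma sig2_length : ∀ (t : List Bool) (pp : Bool), (sig2 pp t).length = t.length := by
  intro t
  induction t with
  | nil => intro pp; rfl
  | cons c t' ih => intro pp; simp [sig2, ih]

lemma sig_length (p : List Bool) : (sig p).length = p.length - 1 := by
  cases p with
  | nil => rfl
  | cons c t => simp [sig, sig2_length]

lemma occ_iff : ∀ (p : List Bool) (i : ℕ), OccursAt [true, true] p i ↔ (sig p)[i]? = some true := by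
  intro p
  induction p with
  | nil =>
    intro i
    constructor
    · intro h; exact absurd h (by simp [OccursAt])
    · intro h; simp [sig] at h
  | cons a t ih =>
    intro i
    match i with
    | 0 =>
      unfold OccursAt
      simp only [List.drop_zero]
      match t with
      | [] => simp [sig, sig2]
      | b :: t' => cases a <;> cases b <;> simp [sig, sig2]
    | j+1 =>
      have hocc : OccursAt [true,true] (a::t) (j+1) ↔ OccursAt [true,true] t j := by
        unfold OccursAt; rw [List.drop_succ_cons]
      rw [hocc, ih j]
      match t with
      | [] => simp [sig, sig2]
      | b :: t' => simp [sig, sig2]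

lemma pathEquiv_iff (p q : List Bool) :
    PathEquiv [true, true] p q ↔ (p.length = q.length ∧ sig p = sig q) := by
  constructor
  · intro h
    refine ⟨h.1, ?_⟩
    have hL : (sig p).length = (sig q).length := by rw [sig_length, sig_length, h.1]
    apply List.ext_getElem?
    intro i
    by_cases hi : i < (sig p).length
    · have h1 : (sig p)[i]? = some ((sig p)[i]) := List.getElem?_eq_getElem hi
      have h2 : (sig q)[i]? = some ((sig q)[i]'(hL ▸ hi)) := List.getElem?_eq_getElem (hL ▸ hi)
      have hiff := (occ_iff p i).symm.trans ((h.2 i).trans (occ_iff q i))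
      rw [h1, h2] at hiff ⊢
      simp only [Option.some.injEq] at hiff ⊢
      rcases Bool.eq_false_or_eq_true ((sig p)[i]) with hx | hx <;>
        rcases Bool.eq_false_or_eq_true ((sig q)[i]'(hL ▸ hi)) with hy | hy <;> simp_all
    · rw [List.getElem?_eq_none (by omega), List.getElem?_eq_none (by omega)]
  · rintro ⟨h1, h2⟩
    exact ⟨h1, fun i => by rw [occ_iff, occ_iff, h2]⟩

def allL : ℕ → Finset (List Bool)
  | 0 => {[]}
  | m+1 => ((allL m).image (List.cons false)) ∪ ((allL m).image (List.cons true))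

lemma mem_allL : ∀ m (w : List Bool), w ∈ allL m ↔ w.length = m := by
  intro m
  induction m with
  | zero =>
    intro w
    simp [allL, List.length_eq_zero_iff]
  | succ m ih =>
    intro w
    simp only [allL, Finset.mem_union, Finset.mem_image]
    constructor
    · rintro (⟨u, hu, rfl⟩ | ⟨u, hu, rfl⟩) <;> simp [(ih u).mp hu]
    · intro hw
      match w with
      | a :: t =>
        have ht : t ∈ allL m := (ih t).mpr (by simpa using hw)
        cases a
        · exact Or.inl ⟨t, ht, rfl⟩
        · exact Or.inr ⟨t, ht, rfl⟩

def cnt (s : St) (m : ℕ) : ℕ := ((allL m).filter (fun w => live s w = true)).card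

lemma cnt_zero (s : St) : cnt s 0 = 1 := by
  cases s <;> simp [cnt, allL, Finset.filter_singleton, live]

lemma cnt_succ_aux (s : St) (m : ℕ) :
    cnt s (m+1) = ((allL m).filter (fun w => live s (false :: w) = true)).card
                + ((allL m).filter (fun w => live s (true :: w) = true)).card := by
  unfold cnt
  show ((((allL m).image (List.cons false)) ∪ ((allL m).image (List.cons true))).filter
      (fun w => live s w = true)).card = _
  rw [Finset.filter_union, Finset.card_union_of_disjoint, Finset.filter_image,
    Finset.filter_image, Finset.card_image_of_injective _ (List.cons_injective),
    Finset.card_image_of_injective _ (List.cons_injective)]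
  · apply Finset.disjoint_left.mpr
    intro w hw1 hw2
    rw [Finset.filter_image] at hw1 hw2
    obtain ⟨u, _, rfl⟩ := Finset.mem_image.mp hw1
    obtain ⟨v, _, hv⟩ := Finset.mem_image.mp hw2
    simp at hv

lemma cntA_succ (m : ℕ) : cnt A (m+1) = cnt B m + cnt C m := by
  rw [cnt_succ_aux]; rfl

lemma cntB_succ (m : ℕ) : cnt B (m+1) = cnt A m := by
  rw [cnt_succ_aux]
  have h2 : ((allL m).filter (fun w => live B (true :: w) = true)).card = 0 := by
    rw [Finset.card_eq_zero]
    apply Finset.filter_false_of_mem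
    intro w _
    show ¬ (false = true)
    simp
  rw [h2]
  rfl

lemma cntC_succ (m : ℕ) : cnt C (m+1) = cnt D m + cnt C m := by
  rw [cnt_succ_aux]; rfl

lemma cntD_succ (m : ℕ) : cnt D (m+1) = cnt E m := by
  rw [cnt_succ_aux]
  have h2 : ((allL m).filter (fun w => live D (true :: w) = true)).card = 0 := by
    rw [Finset.card_eq_zero]
    apply Finset.filter_false_of_mem
    intro w _
    show ¬ (false = true)
    simp
  rw [h2]
  rfl

lemma cntE_succ (m : ℕ) : cnt E (m+1) = cnt E m + cnt C m := by
  rw [cnt_succ_aux]; rfl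

lemma cnt1A : cnt A 1 = 2 := by rw [show (1:ℕ) = 0+1 from rfl, cntA_succ, cnt_zero, cnt_zero]
lemma cnt1B : cnt B 1 = 1 := by rw [show (1:ℕ) = 0+1 from rfl, cntB_succ, cnt_zero]
lemma cnt1C : cnt C 1 = 2 := by rw [show (1:ℕ) = 0+1 from rfl, cntC_succ, cnt_zero, cnt_zero]
lemma cnt1D : cnt D 1 = 1 := by rw [show (1:ℕ) = 0+1 from rfl, cntD_succ, cnt_zero]
lemma cnt1E : cnt E 1 = 2 := by rw [show (1:ℕ) = 0+1 from rfl, cntE_succ, cnt_zero, cnt_zero]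
lemma cnt2A : cnt A 2 = 3 := by rw [show (2:ℕ) = 1+1 from rfl, cntA_succ, cnt1B, cnt1C]
lemma cnt2B : cnt B 2 = 2 := by rw [show (2:ℕ) = 1+1 from rfl, cntB_succ, cnt1A]
lemma cnt2C : cnt C 2 = 3 := by rw [show (2:ℕ) = 1+1 from rfl, cntC_succ, cnt1D, cnt1C]
lemma cnt2D : cnt D 2 = 2 := by rw [show (2:ℕ) = 1+1 from rfl, cntD_succ, cnt1E]
lemma cnt2E : cnt E 2 = 4 := by rw [show (2:ℕ) = 1+1 from rfl, cntE_succ, cnt1E, cnt1C]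
lemma cnt3A : cnt A 3 = 5 := by rw [show (3:ℕ) = 2+1 from rfl, cntA_succ, cnt2B, cnt2C]
lemma cnt3B : cnt B 3 = 3 := by rw [show (3:ℕ) = 2+1 from rfl, cntB_succ, cnt2A]
lemma cnt3C : cnt C 3 = 5 := by rw [show (3:ℕ) = 2+1 from rfl, cntC_succ, cnt2D, cnt2C]
lemma cnt3D : cnt D 3 = 4 := by rw [show (3:ℕ) = 2+1 from rfl, cntD_succ, cnt2E]
lemma cnt3E : cnt E 3 = 7 := by rw [show (3:ℕ) = 2+1 from rfl, cntE_succ, cnt2E, cnt2C]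
lemma cnt4A : cnt A 4 = 8 := by rw [show (4:ℕ) = 3+1 from rfl, cntA_succ, cnt3B, cnt3C]
lemma cnt4B : cnt B 4 = 5 := by rw [show (4:ℕ) = 3+1 from rfl, cntB_succ, cnt3A]
lemma cnt4C : cnt C 4 = 9 := by rw [show (4:ℕ) = 3+1 from rfl, cntC_succ, cnt3D, cnt3C]
lemma cnt4D : cnt D 4 = 7 := by rw [show (4:ℕ) = 3+1 from rfl, cntD_succ, cnt3E]
lemma cnt4E : cnt E 4 = 12 := by rw [show (4:ℕ) = 3+1 from rfl, cntE_succ, cnt3E, cnt3C]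
lemma cnt5A : cnt A 5 = 14 := by rw [show (5:ℕ) = 4+1 from rfl, cntA_succ, cnt4B, cnt4C]
lemma cnt5B : cnt B 5 = 8 := by rw [show (5:ℕ) = 4+1 from rfl, cntB_succ, cnt4A]
lemma cnt5C : cnt C 5 = 16 := by rw [show (5:ℕ) = 4+1 from rfl, cntC_succ, cnt4D, cnt4C]
lemma cnt5D : cnt D 5 = 12 := by rw [show (5:ℕ) = 4+1 from rfl, cntD_succ, cnt4E]
lemma cnt5E : cnt E 5 = 21 := by rw [show (5:ℕ) = 4+1 from rfl, cntE_succ, cnt4E, cnt4C]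

lemma rec_all : ∀ m s, cnt s (m+5) + cnt s (m+2) + cnt s m = 2 * cnt s (m+4) + cnt s (m+1) := by
  intro m
  induction m with
  | zero =>
    intro s
    cases s <;>
      simp only [Nat.zero_add, cnt_zero, cnt1A, cnt1B, cnt1C, cnt1D, cnt1E, cnt2A, cnt2B, cnt2C,
        cnt2D, cnt2E, cnt4A, cnt4B, cnt4C, cnt4D, cnt4E, cnt5A, cnt5B, cnt5C, cnt5D, cnt5E]
  | succ m ih =>
    have hA := ih A
    have hB := ih B
    have hC := ih C
    have hD := ih D
    have hE := ih E
    clear ih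
    intro s
    cases s
    case A =>
      have s0 := cntA_succ m
      have s1 : cnt A (m+2) = cnt B (m+1) + cnt C (m+1) := by
        have := cntA_succ (m+1); rwa [show m+1+1 = m+2 by omega] at this
      have s2 : cnt A (m+3) = cnt B (m+2) + cnt C (m+2) := by
        have := cntA_succ (m+2); rwa [show m+2+1 = m+3 by omega] at this
      have s3 : cnt A (m+4) = cnt B (m+3) + cnt C (m+3) := by
        have := cntA_succ (m+3); rwa [show m+3+1 = m+4 by omega] at this
      have s4 : cnt A (m+5) = cnt B (m+4) + cnt C (m+4) := by
        have := cntA_succ (m+4); rwa [show m+4+1 = m+5 by omega] at this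
      have s5 : cnt A (m+6) = cnt B (m+5) + cnt C (m+5) := by
        have := cntA_succ (m+5); rwa [show m+5+1 = m+6 by omega] at this
      rw [show m+1+5 = m+6 by omega, show m+1+2 = m+3 by omega, show m+1+4 = m+5 by omega,
        show m+1+1 = m+2 by omega]
      omega
    case B =>
      have s0 := cntB_succ m
      have s1 : cnt B (m+2) = cnt A (m+1) := by
        have := cntB_succ (m+1); rwa [show m+1+1 = m+2 by omega] at this
      have s2 : cnt B (m+3) = cnt A (m+2) := by
        have := cntB_succ (m+2); rwa [show m+2+1 = m+3 by omega] at this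
      have s3 : cnt B (m+4) = cnt A (m+3) := by
        have := cntB_succ (m+3); rwa [show m+3+1 = m+4 by omega] at this
      have s4 : cnt B (m+5) = cnt A (m+4) := by
        have := cntB_succ (m+4); rwa [show m+4+1 = m+5 by omega] at this
      have s5 : cnt B (m+6) = cnt A (m+5) := by
        have := cntB_succ (m+5); rwa [show m+5+1 = m+6 by omega] at this
      rw [show m+1+5 = m+6 by omega, show m+1+2 = m+3 by omega, show m+1+4 = m+5 by omega,
        show m+1+1 = m+2 by omega]
      omega
    case C =>
      have s0 := cntC_succ m
      have s1 : cnt C (m+2) = cnt D (m+1) + cnt C (m+1) := by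
        have := cntC_succ (m+1); rwa [show m+1+1 = m+2 by omega] at this
      have s2 : cnt C (m+3) = cnt D (m+2) + cnt C (m+2) := by
        have := cntC_succ (m+2); rwa [show m+2+1 = m+3 by omega] at this
      have s3 : cnt C (m+4) = cnt D (m+3) + cnt C (m+3) := by
        have := cntC_succ (m+3); rwa [show m+3+1 = m+4 by omega] at this
      have s4 : cnt C (m+5) = cnt D (m+4) + cnt C (m+4) := by
        have := cntC_succ (m+4); rwa [show m+4+1 = m+5 by omega] at this
      have s5 : cnt C (m+6) = cnt D (m+5) + cnt C (m+5) := by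
        have := cntC_succ (m+5); rwa [show m+5+1 = m+6 by omega] at this
      rw [show m+1+5 = m+6 by omega, show m+1+2 = m+3 by omega, show m+1+4 = m+5 by omega,
        show m+1+1 = m+2 by omega]
      omega
    case D =>
      have s0 := cntD_succ m
      have s1 : cnt D (m+2) = cnt E (m+1) := by
        have := cntD_succ (m+1); rwa [show m+1+1 = m+2 by omega] at this
      have s2 : cnt D (m+3) = cnt E (m+2) := by
        have := cntD_succ (m+2); rwa [show m+2+1 = m+3 by omega] at this
      have s3 : cnt D (m+4) = cnt E (m+3) := by
        have := cntD_succ (m+3); rwa [show m+3+1 = m+4 by omega] at this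
      have s4 : cnt D (m+5) = cnt E (m+4) := by
        have := cntD_succ (m+4); rwa [show m+4+1 = m+5 by omega] at this
      have s5 : cnt D (m+6) = cnt E (m+5) := by
        have := cntD_succ (m+5); rwa [show m+5+1 = m+6 by omega] at this
      rw [show m+1+5 = m+6 by omega, show m+1+2 = m+3 by omega, show m+1+4 = m+5 by omega,
        show m+1+1 = m+2 by omega]
      omega
    case E =>
      have s0 := cntE_succ m
      have s1 : cnt E (m+2) = cnt E (m+1) + cnt C (m+1) := by
        have := cntE_succ (m+1); rwa [show m+1+1 = m+2 by omega] at this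
      have s2 : cnt E (m+3) = cnt E (m+2) + cnt C (m+2) := by
        have := cntE_succ (m+2); rwa [show m+2+1 = m+3 by omega] at this
      have s3 : cnt E (m+4) = cnt E (m+3) + cnt C (m+3) := by
        have := cntE_succ (m+3); rwa [show m+3+1 = m+4 by omega] at this
      have s4 : cnt E (m+5) = cnt E (m+4) + cnt C (m+4) := by
        have := cntE_succ (m+4); rwa [show m+4+1 = m+5 by omega] at this
      have s5 : cnt E (m+6) = cnt E (m+5) + cnt C (m+5) := by
        have := cntE_succ (m+5); rwa [show m+5+1 = m+6 by omega] at this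
      rw [show m+1+5 = m+6 by omega, show m+1+2 = m+3 by omega, show m+1+4 = m+5 by omega,
        show m+1+1 = m+2 by omega]
      omega


lemma P1_sig (p : List Bool) : P1 (sig p) = true := by
  cases p with
  | nil => rfl
  | cons c t => exact P1_sig2 t c

lemma live_sig {p : List Bool} (hb : Good 0 p) : live A (sig p) = true :=
  liveA (sig p).length (sig p) le_rfl (P1_sig p) (P2_sig p.length p le_rfl hb)

lemma build_spec {w : List Bool} (hl : live A w = true) :
    Good 0 (build false false w) ∧ sig (build false false w) = w := by
  have h := main_build w A false false 0 hl ⟨rfl, rfl, le_rfl⟩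
  refine ⟨h.1, ?_⟩
  have hne : build false false w ≠ [] := by
    intro hx
    have := build_length false false w
    rw [hx] at this
    simp at this
  have h2 := h.2
  rw [sig2_false _ hne] at h2
  exact (List.cons.injEq _ _ _ _).mp h2 |>.2

lemma numBallot_zero : numBallotClasses [true, true] 0 = 1 := by
  unfold numBallotClasses
  rw [Nat.card_eq_one_iff_unique]
  constructor
  · constructor
    intro a b
    induction a using Quotient.ind with | _ p =>
    induction b using Quotient.ind with | _ q =>
    have hp : p.1 = [] := List.eq_nil_of_length_eq_zero p.2.2
    have hq : q.1 = [] := List.eq_nil_of_length_eq_zero q.2.2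
    congr 1
    exact Subtype.ext (hp.trans hq.symm)
  · exact ⟨⟦⟨[], fun k => by simp, rfl⟩⟧⟩

lemma numBallot_succ (n : ℕ) : numBallotClasses [true, true] (n + 1) = cnt A n := by
  unfold numBallotClasses cnt
  have memF : ∀ (p : {p : List Bool // IsBallot p ∧ p.length = n + 1}),
      sig p.1 ∈ (allL n).filter (fun w => live A w = true) := by
    intro p
    rw [Finset.mem_filter]
    constructor
    · rw [mem_allL, sig_length, p.2.2]; omega
    · exact live_sig ((isBallot_iff p.1).mp p.2.1)
  let f : Quotient (ballotSetoid [true, true] (n+1)) →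
      {w // w ∈ (allL n).filter (fun w => live A w = true)} :=
    Quotient.lift (fun p => ⟨sig p.1, memF p⟩)
      (fun p q h => Subtype.ext ((pathEquiv_iff p.1 q.1).mp h).2)
  have hbij : Function.Bijective f := by
    constructor
    · intro a b
      induction a using Quotient.ind with | _ p =>
      induction b using Quotient.ind with | _ q =>
      intro hfe
      apply Quotient.sound
      show PathEquiv [true, true] p.1 q.1
      rw [pathEquiv_iff]
      refine ⟨by rw [p.2.2, q.2.2], ?_⟩
      simpa [f] using hfe
    · rintro ⟨w, hw⟩
      rw [Finset.mem_filter] at hw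
      obtain ⟨hw1, hw2⟩ := hw
      have hspec := build_spec hw2
      refine ⟨⟦⟨build false false w, (isBallot_iff _).mpr hspec.1, ?_⟩⟧, ?_⟩
      · rw [build_length, (mem_allL n w).mp hw1]
      · exact Subtype.ext hspec.2
  calc Nat.card (Quotient (ballotSetoid [true, true] (n+1)))
      = Nat.card {w // w ∈ (allL n).filter (fun w => live A w = true)} :=
        Nat.card_eq_of_bijective f hbij
    _ = ((allL n).filter (fun w => live A w = true)).card := by
        exact Nat.card_eq_finsetCard _

end UUAux

open PowerSeries in
/-- the generating function of the numbers of UU-equivalence classes of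
ballot paths satisfies `A(x) (1 - 2x + x^3 - x^4 + x^5) = 1 - x - x^4`. -/
theorem uu_classes_gf :
    (PowerSeries.mk fun n => (numBallotClasses [true, true] n : ℚ)) *
      (1 - 2 * X + X ^ 3 - X ^ 4 + X ^ 5) = 1 - X - X ^ 4 := by
  classical
  have key0 := UUAux.numBallot_zero
  have keyS := UUAux.numBallot_succ
  set c : ℕ → ℚ := fun n => (numBallotClasses [true, true] n : ℚ) with hcdef
  have hv0 : c 0 = 1 := by simp [hcdef, key0]
  have hn1 : numBallotClasses [true, true] 1 = 1 := by
    rw [show (1:ℕ) = 0+1 from rfl, keyS, UUAux.cnt_zero]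
  have hn2 : numBallotClasses [true, true] 2 = 2 := by
    rw [show (2:ℕ) = 1+1 from rfl, keyS, UUAux.cnt1A]
  have hn3 : numBallotClasses [true, true] 3 = 3 := by
    rw [show (3:ℕ) = 2+1 from rfl, keyS, UUAux.cnt2A]
  have hn4 : numBallotClasses [true, true] 4 = 5 := by
    rw [show (4:ℕ) = 3+1 from rfl, keyS, UUAux.cnt3A]
  have hn5 : numBallotClasses [true, true] 5 = 8 := by
    rw [show (5:ℕ) = 4+1 from rfl, keyS, UUAux.cnt4A]
  have hv1 : c 1 = 1 := by simp [hcdef, hn1]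
  have hv2 : c 2 = 2 := by simp [hcdef, hn2]
  have hv3 : c 3 = 3 := by simp [hcdef, hn3]
  have hv4 : c 4 = 5 := by simp [hcdef, hn4]
  have hv5 : c 5 = 8 := by simp [hcdef, hn5]
  have hrec : ∀ k, c (k+5) + c (k+2) + c k = 2 * c (k+4) + c (k+1) := by
    intro k
    cases k with
    | zero =>
      norm_num [hv0, hv1, hv2, hv4, hv5]
    | succ k' =>
      have h := UUAux.rec_all k' UUAux.St.A
      simp only [hcdef]
      rw [show k'+1+5 = (k'+5)+1 by omega, show k'+1+2 = (k'+2)+1 by omega,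
          show k'+1+4 = (k'+4)+1 by omega]
      rw [keyS (k'+5), keyS (k'+2), keyS k', keyS (k'+4), keyS (k'+1)]
      exact_mod_cast h
  apply PowerSeries.ext
  intro n
  have hL : (mk c) * (1 - 2 * X + X ^ 3 - X ^ 4 + X ^ 5)
      = mk c - (mk c * X^1) - (mk c * X^1) + mk c * X^3 - mk c * X^4 + mk c * X^5 := by
    ring
  rw [hL]
  simp only [map_sub, map_add, PowerSeries.coeff_mul_X_pow', PowerSeries.coeff_one,
    PowerSeries.coeff_X, PowerSeries.coeff_X_pow, PowerSeries.coeff_mk]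
  match n with
  | 0 => norm_num [hv0]
  | 1 => norm_num [hv0, hv1]
  | 2 => norm_num [hv1, hv2]
  | 3 => norm_num [hv0, hv2, hv3]
  | 4 => norm_num [hv0, hv1, hv3, hv4]
  | (k+5) =>
    have h := hrec k
    rw [if_pos (by omega : 1 ≤ k+5), if_pos (by omega : 3 ≤ k+5),
        if_pos (by omega : 4 ≤ k+5), if_pos (by omega : 5 ≤ k+5),
        if_neg (by omega : ¬ (k+5 = 0)), if_neg (by omega : ¬ (k+5 = 1)),
        if_neg (by omega : ¬ (k+5 = 4))]
    rw [show k+5-1 = k+4 by omega, show k+5-3 = k+2 by omega,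
        show k+5-4 = k+1 by omega, show k+5-5 = k by omega]
    linarith [h]
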